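/- arXiv:2208.10579 — 2 statements merged into one kernel-verified Lean document; each statement's English description precedes it below -/
import Mathlib

section
/- Let M be a smooth k-dimensional submanifold of ℝ^{n+k} and let NM denote its normal bundle, i.e., the set of pairs (x,v) with x ∈ M and v ∈ T_xM^⊥ ⊂ ℝ^{n+k}. Then there exists an open neighborhood of the zero section of NM which is mapped diffeomorphically by γ(x,v) = x + v onto an open neighborhood of M in ℝ^{n+k}. -/
/- Framework: embedded submanifolds of Euclidean space (Guillemin–Pollack style),
tangent spaces via velocity vectors of curves, local-straightening charts. -/

noncomputable section
open Set Function
open scoped RealInnerProductSpace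

abbrev Euc (n : ℕ) : Type := EuclideanSpace ℝ (Fin n)

/-- Velocity vectors at `x` of smooth curves through `x` contained in `S`. -/
def tangentSet {E : Type*} [NormedAddCommGroup E] [NormedSpace ℝ E] (S : Set E) (x : E) : Set E :=
  {v | ∃ γ : ℝ → E, (∀ t, γ t ∈ S) ∧ γ 0 = x ∧ HasDerivAt γ v 0}

/-- The tangent space of a subset `S` at `x`, as a linear subspace of the ambient space. -/
def tangentSpaceOf {E : Type*} [NormedAddCommGroup E] [NormedSpace ℝ E] (S : Set E) (x : E) :
    Submodule ℝ E := Submodule.span ℝ (tangentSet S x)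

/-- `S` is a smooth embedded `k`-dimensional submanifold (without boundary):
around every point there is a smooth local straightening diffeomorphism carrying `S`
onto a `k`-dimensional linear subspace. -/
def IsSubmanifoldOfDim {E : Type*} [NormedAddCommGroup E] [NormedSpace ℝ E]
    (k : ℕ) (S : Set E) : Prop :=
  ∀ x ∈ S, ∃ (U V : Set E) (φ ψ : E → E) (K : Submodule ℝ E),
    Module.finrank ℝ K = k ∧ IsOpen U ∧ IsOpen V ∧ x ∈ U ∧
    ContDiffOn ℝ (⊤ : ℕ∞) φ U ∧ ContDiffOn ℝ (⊤ : ℕ∞) ψ V ∧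
    MapsTo φ U V ∧ MapsTo ψ V U ∧
    (∀ y ∈ U, ψ (φ y) = y) ∧ (∀ z ∈ V, φ (ψ z) = z) ∧
    S ∩ U = U ∩ φ ⁻¹' (K : Set E)

open Topology Metric
open scoped ContDiff

/-! In a straightening chart `φ : U → V`, carrying `M ∩ U` into a subspace `K`, split
`a = P a + Q a` along `K ⊕ Kᗮ`. Since `Dψ` carries `K` onto the tangent spaces of `M`, the map
`a ↦ (ψ (P a), (Dφ)^* (Q a))` parametrizes the normal bundle over `M ∩ U`. Composed with
`(x, v) ↦ x + v` it has differential `Dψ ∘ P + (Dφ)^* ∘ Q` along the zero section, which is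
injective because its two summands take orthogonal values; the inverse function theorem then
gives smooth local inverses of `x + v` on the normal bundle.

To glue them, let `ρ x ≤ 1` be the largest radius of a ball around `(x, 0)` contained in the
domain of a single local inverse; `ρ` is `1`-Lipschitz and positive on `M`. The tube
`O = {(x, v) | ‖v‖ < ρ x / 2}` works: if `x + v = y + w` in `O` with `ρ y ≤ ρ x`, then
`‖x - y‖ ≤ ‖v‖ + ‖w‖ < ρ x`, so both points lie in one domain, where `x + v` is injective.
The inverse of `x + v` on `O` agrees near each point with a local inverse, hence is smooth. -/

section Calculus

variable {𝕜 : Type*} [NontriviallyNormedField 𝕜] {E F : Type*} [NormedAddCommGroup E]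
  [NormedSpace 𝕜 E] [NormedAddCommGroup F] [NormedSpace 𝕜 F]

lemma fderiv_comp_fderiv_eq_id {f : E → F} {g : F → E} {y : E} (hf : DifferentiableAt 𝕜 f y)
    (hg : DifferentiableAt 𝕜 g (f y)) (hgf : ∀ᶠ z in 𝓝 y, g (f z) = z) :
    (fderiv 𝕜 g (f y)).comp (fderiv 𝕜 f y) = ContinuousLinearMap.id 𝕜 E :=
  (hg.hasFDerivAt.comp y hf.hasFDerivAt).unique <|
    (Filter.EventuallyEq.hasFDerivAt_iff (f₀ := g ∘ f) hgf).2 (hasFDerivAt_id y)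

lemma Submodule.hasDerivAt_mem {K : Submodule 𝕜 E} (hK : IsClosed (K : Set E)) {c : 𝕜 → E}
    {d : E} {t : 𝕜} (hc : HasDerivAt c d t) (hcK : ∀ᶠ s in 𝓝 t, c s ∈ K) : d ∈ K := by
  refine hK.mem_of_tendsto (hasDerivAt_iff_tendsto_slope.1 hc) ?_
  filter_upwards [nhdsWithin_le_nhds hcK] with s hs
  exact K.smul_mem _ (K.sub_mem hs hcK.self_of_nhds)

end Calculus

section InverseFunction

variable {𝕂 : Type*} [RCLike 𝕂] {E F : Type*} [NormedAddCommGroup E] [NormedSpace 𝕂 E]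
  [CompleteSpace E] [NormedAddCommGroup F] [NormedSpace 𝕂 F] {n : WithTop ℕ∞}

theorem exists_openPartialHomeomorph_contDiffOn_symm {f : E → F} {s : Set E} (hs : IsOpen s)
    (hf : ContDiffOn 𝕂 n f s) (hn : 1 ≤ n) {a : E} (ha : a ∈ s) {f' : E ≃L[𝕂] F}
    (hf' : HasFDerivAt f (f' : E →L[𝕂] F) a) :
    ∃ e : OpenPartialHomeomorph E F, ⇑e = f ∧ a ∈ e.source ∧ e.source ⊆ s ∧
      ContDiffOn 𝕂 n e.symm e.target := by
  have hn0 : n ≠ 0 := (zero_lt_one.trans_le hn).ne'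
  have hfa : ContDiffAt 𝕂 n f a := hf.contDiffAt (hs.mem_nhds ha)
  set e₀ := hfa.toOpenPartialHomeomorph f hf' hn0
  -- shrink the source to where the differential stays invertible
  set G : Set E := s ∩ fderiv 𝕂 f ⁻¹' range ((↑) : (E ≃L[𝕂] F) → E →L[𝕂] F)
  have hG : IsOpen G := (hf.continuousOn_fderiv_of_isOpen hs hn).isOpen_inter_preimage hs
    ContinuousLinearEquiv.isOpen
  refine ⟨e₀.restrOpen G hG, hfa.toOpenPartialHomeomorph_coe hf' hn0,
    ⟨hfa.mem_toOpenPartialHomeomorph_source hf' hn0, ha, f', hf'.fderiv.symm⟩,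
    fun x hx => hx.2.1, fun u hu => ?_⟩
  obtain ⟨hu, hsymm_s, f'', hf''⟩ : u ∈ e₀.target ∧ e₀.symm u ∈ G := by
    simpa [OpenPartialHomeomorph.restrOpen_toPartialEquiv] using hu
  have hfu : ContDiffAt 𝕂 n f (e₀.symm u) := hf.contDiffAt (hs.mem_nhds hsymm_s)
  have hf''u : HasFDerivAt f (f'' : E →L[𝕂] F) (e₀.symm u) :=
    hf'' ▸ (hfu.differentiableAt hn0).hasFDerivAt
  exact (e₀.contDiffAt_symm hu hf''u hfu).contDiffWithinAt

end InverseFunction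

section InnerProduct

variable {E F : Type*} [NormedAddCommGroup E] [InnerProductSpace ℝ E] [CompleteSpace E]
  [NormedAddCommGroup F] [InnerProductSpace ℝ F] [CompleteSpace F]

open ContinuousLinearMap

lemma Submodule.mem_orthogonal_map_iff (K : Submodule ℝ E) (L : E →L[ℝ] F) (v : F) :
    v ∈ (K.map (L : E →ₗ[ℝ] F))ᗮ ↔ adjoint L v ∈ Kᗮ := by
  simp [Submodule.mem_orthogonal, adjoint_inner_right]

lemma injective_comp_starProjection_add (K : Submodule ℝ E) [K.HasOrthogonalProjection]
    {L : E →L[ℝ] F} {L' : F →L[ℝ] E} (hL : L'.comp L = ContinuousLinearMap.id ℝ E) :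
    Injective (L.comp K.starProjection + (adjoint L').comp Kᗮ.starProjection) := by
  have hL' : (adjoint L).comp (adjoint L') = ContinuousLinearMap.id ℝ E := by
    rw [← adjoint_comp, hL, adjoint_id]
  refine (injective_iff_map_eq_zero _).2 fun a ha => ?_
  set u := L (K.starProjection a)
  set w := adjoint L' (Kᗮ.starProjection a)
  have hsum : u + w = 0 := ha
  have huw : ⟪u, w⟫ = 0 := by
    rw [adjoint_inner_right, ← ContinuousLinearMap.comp_apply, hL, id_apply]
    exact K.inner_right_of_mem_orthogonal (K.starProjection_apply_mem a)
      (Kᗮ.starProjection_apply_mem a)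
  have hu : u = 0 := by
    rw [eq_neg_of_add_eq_zero_right hsum, inner_neg_right, neg_eq_zero,
      real_inner_self_eq_norm_sq] at huw
    simpa using huw
  have hw : w = 0 := by rwa [hu, zero_add] at hsum
  have hP : K.starProjection a = L' u := by
    rw [← ContinuousLinearMap.comp_apply L', hL, id_apply]
  have hQ : Kᗮ.starProjection a = adjoint L w := by
    rw [← ContinuousLinearMap.comp_apply (adjoint L), hL', id_apply]
  rw [← K.starProjection_add_starProjection_orthogonal a, hP, hQ, hu, hw, map_zero, map_zero,
    add_zero]

lemma contDiff_adjoint {n : WithTop ℕ∞} :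
    ContDiff ℝ n (adjoint : (E →L[ℝ] F) → F →L[ℝ] E) :=
  IsBoundedLinearMap.contDiff ⟨⟨map_add _, fun r L => by simp⟩, 1, one_pos, fun L => by simp⟩

end InnerProduct

section LebesgueRadius

variable {X ι : Type*} [PseudoMetricSpace X] (A : ι → Set X)

def lebesgueRadius (x : X) : ℝ :=
  sSup {r ∈ Icc (0 : ℝ) 1 | ∃ i, closedBall x r ⊆ A i}

variable {A}

lemma lebesgueRadius_nonneg (x : X) : 0 ≤ lebesgueRadius A x :=
  Real.sSup_nonneg fun _ hr => hr.1.1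

lemma le_lebesgueRadius {x : X} {r : ℝ} {i : ι} (hr : r ∈ Icc (0 : ℝ) 1)
    (hi : closedBall x r ⊆ A i) : r ≤ lebesgueRadius A x :=
  le_csSup ⟨1, fun _ hr => hr.1.2⟩ ⟨hr, i, hi⟩

lemma lebesgueRadius_le_add_dist (x y : X) :
    lebesgueRadius A x ≤ lebesgueRadius A y + dist x y := by
  refine Real.sSup_le (fun r ⟨⟨hr0, hr1⟩, i, hi⟩ => ?_)
    (add_nonneg (lebesgueRadius_nonneg y) dist_nonneg)
  rcases le_or_gt r (dist x y) with h | h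
  · linarith [lebesgueRadius_nonneg (A := A) y]
  · have hball : closedBall y (r - dist x y) ⊆ A i :=
      (closedBall_subset_closedBall' (by rw [dist_comm]; linarith)).trans hi
    linarith [le_lebesgueRadius ⟨by linarith, by linarith [dist_nonneg (x := x) (y := y)]⟩ hball]

lemma lipschitzWith_lebesgueRadius : LipschitzWith 1 (lebesgueRadius A) :=
  LipschitzWith.of_le_add lebesgueRadius_le_add_dist

lemma lebesgueRadius_pos {x : X} {i : ι} (hA : IsOpen (A i)) (hx : x ∈ A i) :
    0 < lebesgueRadius A x := by
  obtain ⟨ε, hε, hball⟩ := Metric.isOpen_iff.1 hA x hx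
  have hsub : closedBall x (min (ε / 2) 1) ⊆ A i :=
    (closedBall_subset_ball ((min_le_left _ _).trans_lt (half_lt_self hε))).trans hball
  exact (lt_min (half_pos hε) one_pos).trans_le
    (le_lebesgueRadius ⟨by positivity, min_le_right _ _⟩ hsub)

lemma exists_closedBall_subset_of_lt_lebesgueRadius {x : X} {r : ℝ} (hr0 : 0 ≤ r)
    (hr : r < lebesgueRadius A x) : ∃ i, closedBall x r ⊆ A i := by
  have hne : {r ∈ Icc (0 : ℝ) 1 | ∃ i, closedBall x r ⊆ A i}.Nonempty := by
    by_contra h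
    rw [not_nonempty_iff_eq_empty] at h
    rw [lebesgueRadius, h, Real.sSup_empty] at hr
    linarith
  obtain ⟨r', ⟨_, i, hi⟩, hrr'⟩ := exists_lt_of_lt_csSup hne hr
  exact ⟨i, (closedBall_subset_closedBall hrr'.le).trans hi⟩

end LebesgueRadius

section Gluing

variable {E : Type*} [NormedAddCommGroup E] [NormedSpace ℝ E] {n : WithTop ℕ∞}
  {N : Set (E × E)}

structure LocalSumInverse (n : WithTop ℕ∞) (N : Set (E × E)) where
  A : Set (E × E)
  W : Set E
  σ : E → E × E
  isOpen_A : IsOpen A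
  isOpen_W : IsOpen W
  contDiffOn_σ : ContDiffOn ℝ n σ W
  add_mem_W : ∀ p ∈ N ∩ A, p.1 + p.2 ∈ W
  σ_add : ∀ p ∈ N ∩ A, σ (p.1 + p.2) = p
  σ_mem : ∀ u ∈ W, σ u ∈ N ∩ A
  add_σ : ∀ u ∈ W, (σ u).1 + (σ u).2 = u

lemma LocalSumInverse.injOn_add (T : LocalSumInverse n N) :
    InjOn (fun p : E × E => p.1 + p.2) (N ∩ T.A) :=
  fun p hp q hq hpq => by rw [← T.σ_add p hp, ← T.σ_add q hq]; exact congrArg T.σ hpq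

variable (n N) in
def tubeRadius (x : E) : ℝ := lebesgueRadius (fun T : LocalSumInverse n N => T.A) (x, 0)

variable (n N) in
def zeroSectionNhd : Set (E × E) := {p | ‖p.2‖ < tubeRadius n N p.1 / 2}

variable (n N) in
def tube : Set (E × E) := zeroSectionNhd n N ∩ N

lemma tubeRadius_nonneg (x : E) : 0 ≤ tubeRadius n N x := lebesgueRadius_nonneg _

lemma continuous_tubeRadius : Continuous (tubeRadius n N) :=
  lipschitzWith_lebesgueRadius.continuous.comp (continuous_id.prodMk continuous_const)

lemma isOpen_zeroSectionNhd : IsOpen (zeroSectionNhd n N) :=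
  isOpen_lt continuous_snd.norm ((continuous_tubeRadius.comp continuous_fst).div_const 2)

lemma zero_mem_tube {x : E} (hxN : (x, 0) ∈ N) {T : LocalSumInverse n N} (hxT : (x, 0) ∈ T.A) :
    (x, 0) ∈ tube n N := by
  have : 0 < tubeRadius n N x := lebesgueRadius_pos T.isOpen_A hxT
  exact ⟨by simpa [zeroSectionNhd] using half_pos this, hxN⟩

lemma exists_mem_A_of_add_eq_add {x y v w : E} (hv : ‖v‖ < tubeRadius n N x / 2)
    (hw : ‖w‖ < tubeRadius n N y / 2) (hxy : tubeRadius n N y ≤ tubeRadius n N x)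
    (hsum : x + v = y + w) :
    ∃ T : LocalSumInverse n N, (x, v) ∈ T.A ∧ (y, w) ∈ T.A := by
  have hdist : dist y x ≤ ‖v‖ + ‖w‖ := by
    rw [dist_eq_norm, show y - x = v - w by rw [sub_eq_sub_iff_add_eq_add, ← hsum, add_comm]]
    exact norm_sub_le v w
  have hr : max (dist y x) (max ‖v‖ ‖w‖) < tubeRadius n N x := by
    have := tubeRadius_nonneg (n := n) (N := N) y
    exact max_lt (by linarith) (max_lt (by linarith) (by linarith))
  obtain ⟨T, hT⟩ := exists_closedBall_subset_of_lt_lebesgueRadius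
    ((norm_nonneg v).trans ((le_max_left _ _).trans (le_max_right _ _))) hr
  refine ⟨T, hT ?_, hT ?_⟩ <;>
    simp only [mem_closedBall, Prod.dist_eq, dist_self, dist_zero_right, max_le_iff] <;>
    refine ⟨?_, ?_⟩ <;> simp

lemma exists_mem_A_of_mem_tube {p : E × E} (hp : p ∈ tube n N) :
    ∃ T : LocalSumInverse n N, p ∈ T.A :=
  let ⟨T, hT, _⟩ := exists_mem_A_of_add_eq_add hp.1 hp.1 le_rfl rfl
  ⟨T, hT⟩

lemma injOn_add_tube : InjOn (fun p : E × E => p.1 + p.2) (tube n N) := by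
  have key : ∀ p ∈ tube n N, ∀ q ∈ tube n N, tubeRadius n N q.1 ≤ tubeRadius n N p.1 →
      p.1 + p.2 = q.1 + q.2 → p = q := by
    rintro ⟨x, v⟩ hp ⟨y, w⟩ hq hle hsum
    obtain ⟨T, hpT, hqT⟩ := exists_mem_A_of_add_eq_add hp.1 hq.1 hle hsum
    exact T.injOn_add ⟨hp.2, hpT⟩ ⟨hq.2, hqT⟩ hsum
  intro p hp q hq hsum
  rcases le_total (tubeRadius n N q.1) (tubeRadius n N p.1) with h | h
  · exact key p hp q hq h hsum
  · exact (key q hq p hp h hsum.symm).symm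

lemma exists_isOpen_mapsTo_tube {p : E × E} (hp : p ∈ tube n N) :
    ∃ (T : LocalSumInverse n N) (W : Set E),
      IsOpen W ∧ p.1 + p.2 ∈ W ∧ W ⊆ T.W ∧ MapsTo T.σ W (tube n N) := by
  obtain ⟨T, hpT⟩ := exists_mem_A_of_mem_tube hp
  refine ⟨T, T.W ∩ T.σ ⁻¹' zeroSectionNhd n N,
    T.contDiffOn_σ.continuousOn.isOpen_inter_preimage T.isOpen_W isOpen_zeroSectionNhd,
    ⟨T.add_mem_W p ⟨hp.2, hpT⟩, ?_⟩, inter_subset_left, fun u hu => ⟨hu.2, (T.σ_mem u hu.1).1⟩⟩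
  rw [mem_preimage, T.σ_add p ⟨hp.2, hpT⟩]
  exact hp.1

lemma exists_isOpen_eqOn_invFunOn_tube {u : E}
    (hu : u ∈ (fun p : E × E => p.1 + p.2) '' tube n N) :
    ∃ (T : LocalSumInverse n N) (W : Set E), IsOpen W ∧ u ∈ W ∧ W ⊆ T.W ∧
      W ⊆ (fun p : E × E => p.1 + p.2) '' tube n N ∧
      EqOn (invFunOn (fun p : E × E => p.1 + p.2) (tube n N)) T.σ W := by
  obtain ⟨p, hp, rfl⟩ := hu
  obtain ⟨T, W, hW, hpW, hWT, hmaps⟩ := exists_isOpen_mapsTo_tube hp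
  refine ⟨T, W, hW, hpW, hWT, fun u hu => ⟨T.σ u, hmaps hu, T.add_σ u (hWT hu)⟩,
    fun u hu => ?_⟩
  conv_lhs => rw [← T.add_σ u (hWT hu)]
  exact injOn_add_tube.leftInvOn_invFunOn (hmaps hu)

theorem exists_tube_of_localSumInverse (M : Set E) (hN : ∀ x ∈ M, (x, 0) ∈ N)
    (hloc : ∀ x ∈ M, ∃ T : LocalSumInverse n N, (x, 0) ∈ T.A) :
    ∃ (O : Set (E × E)) (U : Set E) (σ : E → E × E),
      IsOpen U ∧ M ⊆ U ∧ (∀ p ∈ O, p ∈ N) ∧ (∃ O' : Set (E × E), IsOpen O' ∧ O = O' ∩ N) ∧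
      (∀ x ∈ M, ((x, 0) : E × E) ∈ O) ∧ ((fun p : E × E => p.1 + p.2) '' O = U) ∧
      InjOn (fun p : E × E => p.1 + p.2) O ∧ ContDiffOn ℝ n σ U ∧
      (∀ p ∈ O, σ (p.1 + p.2) = p) ∧ (∀ u ∈ U, σ u ∈ O ∧ (σ u).1 + (σ u).2 = u) := by
  have hzero : ∀ x ∈ M, ((x, 0) : E × E) ∈ tube n N := fun x hx =>
    let ⟨_, hxT⟩ := hloc x hx
    zero_mem_tube (hN x hx) hxT
  refine ⟨tube n N, (fun p : E × E => p.1 + p.2) '' tube n N,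
    invFunOn (fun p : E × E => p.1 + p.2) (tube n N), ?_,
    fun x hx => ⟨(x, 0), hzero x hx, add_zero x⟩, fun p hp => hp.2,
    ⟨_, isOpen_zeroSectionNhd, rfl⟩, hzero, rfl, injOn_add_tube, ?_,
    fun p hp => injOn_add_tube.leftInvOn_invFunOn hp,
    fun u hu => ⟨invFunOn_mem hu, invFunOn_eq hu⟩⟩
  · refine isOpen_iff_forall_mem_open.2 fun u hu => ?_
    obtain ⟨T, W, hW, huW, -, hWU, -⟩ := exists_isOpen_eqOn_invFunOn_tube hu
    exact ⟨W, hWU, hW, huW⟩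
  · refine contDiffOn_of_locally_contDiffOn fun u hu => ?_
    obtain ⟨T, W, hW, huW, hWT, -, hEq⟩ := exists_isOpen_eqOn_invFunOn_tube hu
    exact ⟨W, hW, huW, (T.contDiffOn_σ.mono (inter_subset_right.trans hWT)).congr
      (hEq.mono inter_subset_right)⟩

end Gluing

section Chart

variable {E : Type*} [NormedAddCommGroup E] [NormedSpace ℝ E] {M : Set E}

structure StraighteningChart (M : Set E) where
  U : Set E
  V : Set E
  φ : E → E
  ψ : E → E
  K : Submodule ℝ E
  isOpen_U : IsOpen U
  isOpen_V : IsOpen V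
  contDiffOn_φ : ContDiffOn ℝ (⊤ : ℕ∞) φ U
  contDiffOn_ψ : ContDiffOn ℝ (⊤ : ℕ∞) ψ V
  mapsTo_φ : MapsTo φ U V
  mapsTo_ψ : MapsTo ψ V U
  ψ_φ : ∀ y ∈ U, ψ (φ y) = y
  φ_ψ : ∀ z ∈ V, φ (ψ z) = z
  inter_U : M ∩ U = U ∩ φ ⁻¹' K

lemma IsSubmanifoldOfDim.exists_straighteningChart {k : ℕ} (hM : IsSubmanifoldOfDim k M)
    {x : E} (hx : x ∈ M) : ∃ c : StraighteningChart M, x ∈ c.U := by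
  obtain ⟨U, V, φ, ψ, K, -, hU, hV, hxU, hφ, hψ, hφUV, hψVU, hψφ, hφψ, hMU⟩ := hM x hx
  exact ⟨⟨U, V, φ, ψ, K, hU, hV, hφ, hψ, hφUV, hψVU, hψφ, hφψ, hMU⟩, hxU⟩

namespace StraighteningChart

variable (c : StraighteningChart M)

lemma φ_mem_K {y : E} (hyM : y ∈ M) (hyU : y ∈ c.U) : c.φ y ∈ c.K :=
  (c.inter_U ▸ ⟨hyM, hyU⟩ : y ∈ c.U ∩ c.φ ⁻¹' c.K).2

lemma ψ_mem {z : E} (hzV : z ∈ c.V) (hzK : z ∈ c.K) : c.ψ z ∈ M :=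
  (c.inter_U.symm ▸ ⟨c.mapsTo_ψ hzV, by rwa [mem_preimage, c.φ_ψ z hzV]⟩ :
    c.ψ z ∈ M ∩ c.U).1

lemma differentiableAt_φ {y : E} (hy : y ∈ c.U) : DifferentiableAt ℝ c.φ y :=
  (c.contDiffOn_φ.contDiffAt (c.isOpen_U.mem_nhds hy)).differentiableAt (by simp)

lemma differentiableAt_ψ {z : E} (hz : z ∈ c.V) : DifferentiableAt ℝ c.ψ z :=
  (c.contDiffOn_ψ.contDiffAt (c.isOpen_V.mem_nhds hz)).differentiableAt (by simp)

lemma fderiv_ψ_comp_fderiv_φ {y : E} (hy : y ∈ c.U) :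
    (fderiv ℝ c.ψ (c.φ y)).comp (fderiv ℝ c.φ y) = ContinuousLinearMap.id ℝ E :=
  fderiv_comp_fderiv_eq_id (c.differentiableAt_φ hy) (c.differentiableAt_ψ (c.mapsTo_φ hy))
    (Filter.eventually_of_mem (c.isOpen_U.mem_nhds hy) c.ψ_φ)

lemma fderiv_φ_comp_fderiv_ψ {z : E} (hz : z ∈ c.V) :
    (fderiv ℝ c.φ (c.ψ z)).comp (fderiv ℝ c.ψ z) = ContinuousLinearMap.id ℝ E :=
  fderiv_comp_fderiv_eq_id (c.differentiableAt_ψ hz) (c.differentiableAt_φ (c.mapsTo_ψ hz))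
    (Filter.eventually_of_mem (c.isOpen_V.mem_nhds hz) c.φ_ψ)

lemma tangentSpaceOf_le_map {z : E} (hzV : z ∈ c.V) (hK : IsClosed (c.K : Set E)) :
    tangentSpaceOf M (c.ψ z) ≤ c.K.map (fderiv ℝ c.ψ z : E →ₗ[ℝ] E) := by
  have hid := c.fderiv_ψ_comp_fderiv_φ (c.mapsTo_ψ hzV)
  rw [c.φ_ψ z hzV] at hid
  refine Submodule.span_le.2 fun v ⟨γ, hγM, hγ0, hγv⟩ => ⟨fderiv ℝ c.φ (c.ψ z) v, ?_, ?_⟩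
  · have hder : HasDerivAt (c.φ ∘ γ) (fderiv ℝ c.φ (c.ψ z) v) 0 :=
      (c.differentiableAt_φ (c.mapsTo_ψ hzV)).hasFDerivAt.comp_hasDerivAt_of_eq 0 hγv hγ0.symm
    have hU : c.U ∈ 𝓝 (γ 0) := c.isOpen_U.mem_nhds (hγ0 ▸ c.mapsTo_ψ hzV)
    refine c.K.hasDerivAt_mem hK hder ?_
    filter_upwards [hγv.continuousAt.preimage_mem_nhds hU] with t ht
    exact c.φ_mem_K (hγM t) ht
  · simpa using congr($hid v)

lemma map_le_tangentSpaceOf {z : E} (hzV : z ∈ c.V) (hzK : z ∈ c.K) :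
    c.K.map (fderiv ℝ c.ψ z : E →ₗ[ℝ] E) ≤ tangentSpaceOf M (c.ψ z) := by
  rintro _ ⟨k, hk, rfl⟩
  obtain ⟨ε, hε, hball⟩ := Metric.isOpen_iff.1 c.isOpen_V z hzV
  set s : ℝ := ε / (‖k‖ + 1)
  have hs : 0 < s := by positivity
  have hsk : ‖s • k‖ < ε := by
    rw [norm_smul, Real.norm_of_nonneg hs.le, div_mul_eq_mul_div, div_lt_iff₀ (by positivity)]
    nlinarith
  -- `tangentSet` asks for curves defined on all of `ℝ`; `sin` keeps this one inside the ball
  have hV : ∀ t, z + Real.sin t • s • k ∈ c.V := fun t => hball <| by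
    rw [mem_ball, dist_eq_norm, add_sub_cancel_left, norm_smul]
    exact (mul_le_of_le_one_left (norm_nonneg _) (by simpa using Real.abs_sin_le_one t)).trans_lt
      hsk
  have hline : HasDerivAt (fun t => z + Real.sin t • s • k) (s • k) 0 := by
    simpa using ((Real.hasDerivAt_sin 0).smul_const (s • k)).const_add z
  have hvel : s • fderiv ℝ c.ψ z k ∈ tangentSet M (c.ψ z) := by
    refine ⟨fun t => c.ψ (z + Real.sin t • s • k),
      fun t => c.ψ_mem (hV t) (c.K.add_mem hzK (c.K.smul_mem _ (c.K.smul_mem _ hk))), by simp, ?_⟩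
    simpa [Function.comp_def] using
      (c.differentiableAt_ψ hzV).hasFDerivAt.comp_hasDerivAt_of_eq 0 hline (by simp)
  simpa [hs.ne'] using (tangentSpaceOf M (c.ψ z)).smul_mem s⁻¹ (Submodule.subset_span hvel)

end StraighteningChart

end Chart

section NormalBundle

variable {E : Type*} [NormedAddCommGroup E] [InnerProductSpace ℝ E]

def normalBundle (M : Set E) : Set (E × E) := {p | p.1 ∈ M ∧ p.2 ∈ (tangentSpaceOf M p.1)ᗮ}

variable [FiniteDimensional ℝ E] {M : Set E}

namespace StraighteningChart

variable (c : StraighteningChart M)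

open ContinuousLinearMap

lemma tangentSpaceOf_eq {z : E} (hzV : z ∈ c.V) (hzK : z ∈ c.K) :
    tangentSpaceOf M (c.ψ z) = c.K.map (fderiv ℝ c.ψ z : E →ₗ[ℝ] E) :=
  le_antisymm (c.tangentSpaceOf_le_map hzV c.K.closed_of_finiteDimensional)
    (c.map_le_tangentSpaceOf hzV hzK)

lemma adjoint_fderiv_ψ_comp_adjoint_fderiv_φ {z : E} (hz : z ∈ c.V) :
    (adjoint (fderiv ℝ c.ψ z)).comp (adjoint (fderiv ℝ c.φ (c.ψ z))) =
      ContinuousLinearMap.id ℝ E := by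
  rw [← adjoint_comp, c.fderiv_φ_comp_fderiv_ψ hz, adjoint_id]

lemma adjoint_fderiv_φ_comp_adjoint_fderiv_ψ {y : E} (hy : y ∈ c.U) :
    (adjoint (fderiv ℝ c.φ y)).comp (adjoint (fderiv ℝ c.ψ (c.φ y))) =
      ContinuousLinearMap.id ℝ E := by
  rw [← adjoint_comp, c.fderiv_ψ_comp_fderiv_φ hy, adjoint_id]

def toNormalBundle (a : E) : E × E :=
  (c.ψ (c.K.starProjection a),
    adjoint (fderiv ℝ c.φ (c.ψ (c.K.starProjection a))) (c.Kᗮ.starProjection a))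

def ofNormalBundle (p : E × E) : E := c.φ p.1 + adjoint (fderiv ℝ c.ψ (c.φ p.1)) p.2

lemma toNormalBundle_mem {a : E} (ha : c.K.starProjection a ∈ c.V) :
    c.toNormalBundle a ∈ normalBundle M := by
  refine ⟨c.ψ_mem ha (c.K.starProjection_apply_mem a), ?_⟩
  rw [toNormalBundle, c.tangentSpaceOf_eq ha (c.K.starProjection_apply_mem a),
    Submodule.mem_orthogonal_map_iff, ← ContinuousLinearMap.comp_apply,
    c.adjoint_fderiv_ψ_comp_adjoint_fderiv_φ ha, id_apply]
  exact c.Kᗮ.starProjection_apply_mem a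

lemma ofNormalBundle_toNormalBundle {a : E} (ha : c.K.starProjection a ∈ c.V) :
    c.ofNormalBundle (c.toNormalBundle a) = a := by
  rw [ofNormalBundle, toNormalBundle, c.φ_ψ _ ha, ← ContinuousLinearMap.comp_apply,
    c.adjoint_fderiv_ψ_comp_adjoint_fderiv_φ ha, id_apply,
    c.K.starProjection_add_starProjection_orthogonal]

lemma toNormalBundle_ofNormalBundle {p : E × E} (hp : p ∈ normalBundle M) (hpU : p.1 ∈ c.U) :
    c.toNormalBundle (c.ofNormalBundle p) = p := by
  obtain ⟨y, v⟩ := p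
  obtain ⟨hyM, hv⟩ := hp
  have hzV : c.φ y ∈ c.V := c.mapsTo_φ hpU
  have hzK : c.φ y ∈ c.K := c.φ_mem_K hyM hpU
  have hw : adjoint (fderiv ℝ c.ψ (c.φ y)) v ∈ c.Kᗮ := by
    rw [← Submodule.mem_orthogonal_map_iff, ← c.tangentSpaceOf_eq hzV hzK, c.ψ_φ y hpU]
    exact hv
  have hP : c.K.starProjection (c.ofNormalBundle (y, v)) = c.φ y :=
    c.K.eq_starProjection_of_mem_orthogonal' hzK hw rfl
  have hQ : c.Kᗮ.starProjection (c.ofNormalBundle (y, v)) =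
      adjoint (fderiv ℝ c.ψ (c.φ y)) v := by
    rw [Submodule.starProjection_orthogonal_val, hP, ofNormalBundle, add_sub_cancel_left]
  rw [toNormalBundle, hP, hQ, c.ψ_φ y hpU, ← ContinuousLinearMap.comp_apply,
    c.adjoint_fderiv_φ_comp_adjoint_fderiv_ψ hpU, id_apply]

lemma contDiffOn_adjoint_fderiv_φ : ContDiffOn ℝ ∞ (fun y => adjoint (fderiv ℝ c.φ y)) c.U :=
  contDiff_adjoint.comp_contDiffOn
    ((contDiffOn_infty_iff_fderiv_of_isOpen c.isOpen_U).1 c.contDiffOn_φ).2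

lemma contDiffOn_toNormalBundle :
    ContDiffOn ℝ ∞ c.toNormalBundle (c.K.starProjection ⁻¹' c.V) := by
  have hbase : ContDiffOn ℝ ∞ (fun a => c.ψ (c.K.starProjection a))
      (c.K.starProjection ⁻¹' c.V) :=
    c.contDiffOn_ψ.comp (c.K.starProjection.contDiff.contDiffOn) fun _ ha => ha
  exact hbase.prodMk <| (c.contDiffOn_adjoint_fderiv_φ.comp hbase fun _ ha => c.mapsTo_ψ ha)
    |>.clm_apply c.Kᗮ.starProjection.contDiff.contDiffOn

lemma continuousOn_ofNormalBundle : ContinuousOn c.ofNormalBundle (c.U ×ˢ univ) := by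
  have hφ : ContinuousOn (fun p : E × E => c.φ p.1) (c.U ×ˢ univ) :=
    c.contDiffOn_φ.continuousOn.comp continuous_fst.continuousOn fun _ hp => hp.1
  have hDψ : ContinuousOn (fderiv ℝ c.ψ) c.V :=
    c.contDiffOn_ψ.continuousOn_fderiv_of_isOpen c.isOpen_V (by simp)
  exact hφ.add <| (contDiff_adjoint (n := 0).continuous.comp_continuousOn
    (hDψ.comp hφ fun _ hp => c.mapsTo_φ hp.1)).clm_apply continuous_snd.continuousOn

lemma exists_hasFDerivAt_add_toNormalBundle {x : E} (hxM : x ∈ M) (hxU : x ∈ c.U) :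
    ∃ T : E ≃L[ℝ] E, HasFDerivAt (fun a => (c.toNormalBundle a).1 + (c.toNormalBundle a).2)
      (T : E →L[ℝ] E) (c.φ x) := by
  have hzK : c.φ x ∈ c.K := c.φ_mem_K hxM hxU
  have hzV : c.φ x ∈ c.V := c.mapsTo_φ hxU
  have hP : c.K.starProjection (c.φ x) = c.φ x := c.K.starProjection_eq_self_iff.2 hzK
  have hQ : c.Kᗮ.starProjection (c.φ x) = 0 := c.K.starProjection_orthogonal_apply_eq_zero hzK
  have hψ : HasFDerivAt c.ψ (fderiv ℝ c.ψ (c.φ x)) (c.K.starProjection (c.φ x)) := by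
    rw [hP]; exact (c.differentiableAt_ψ hzV).hasFDerivAt
  have hadj : HasFDerivAt (fun y => adjoint (fderiv ℝ c.φ y))
      (fderiv ℝ (fun y => adjoint (fderiv ℝ c.φ y)) x) (c.ψ (c.K.starProjection (c.φ x))) := by
    rw [hP, c.ψ_φ x hxU]
    exact ((c.contDiffOn_adjoint_fderiv_φ.contDiffAt (c.isOpen_U.mem_nhds hxU)).differentiableAt
      (by simp)).hasFDerivAt
  have hbase := hψ.comp (c.φ x) c.K.starProjection.hasFDerivAt
  have hnormal : HasFDerivAt (fun a => (c.toNormalBundle a).2)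
      ((adjoint (fderiv ℝ c.φ x)).comp c.Kᗮ.starProjection) (c.φ x) := by
    refine ((hadj.comp (c.φ x) hbase).clm_apply c.Kᗮ.starProjection.hasFDerivAt).congr_fderiv ?_
    rw [hQ, map_zero, add_zero, hP, c.ψ_φ x hxU]
  have hinv := c.fderiv_φ_comp_fderiv_ψ hzV
  rw [c.ψ_φ x hxU] at hinv
  have hinj := injective_comp_starProjection_add c.K hinv
  exact ⟨(LinearEquiv.ofInjectiveEndo _ hinj).toContinuousLinearEquiv, hbase.add hnormal⟩

theorem exists_localSumInverse {x : E} (hxM : x ∈ M) (hxU : x ∈ c.U) :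
    ∃ T : LocalSumInverse ∞ (normalBundle M), (x, 0) ∈ T.A := by
  set D := c.K.starProjection ⁻¹' c.V
  have hD : IsOpen D := c.isOpen_V.preimage c.K.starProjection.continuous
  have hxD : c.φ x ∈ D := by
    rw [mem_preimage, c.K.starProjection_eq_self_iff.2 (c.φ_mem_K hxM hxU)]
    exact c.mapsTo_φ hxU
  obtain ⟨T, hT⟩ := c.exists_hasFDerivAt_add_toNormalBundle hxM hxU
  have hH : ContDiffOn ℝ ∞ (fun a => (c.toNormalBundle a).1 + (c.toNormalBundle a).2) D :=
    c.contDiffOn_toNormalBundle.fst.add c.contDiffOn_toNormalBundle.snd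
  obtain ⟨e, he, hxe, heD, hsymm⟩ :=
    exists_openPartialHomeomorph_contDiffOn_symm hD hH (by simp) hxD hT
  have he_of : ∀ p ∈ normalBundle M ∩ (c.U ×ˢ univ),
      e (c.ofNormalBundle p) = p.1 + p.2 := fun p hp => by
    simp only [he, c.toNormalBundle_ofNormalBundle hp.1 hp.2.1]
  refine ⟨{
    A := (c.U ×ˢ univ) ∩ c.ofNormalBundle ⁻¹' e.source
    W := e.target
    σ := c.toNormalBundle ∘ e.symm
    isOpen_A := c.continuousOn_ofNormalBundle.isOpen_inter_preimage
      (c.isOpen_U.prod isOpen_univ) e.open_source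
    isOpen_W := e.open_target
    contDiffOn_σ := (c.contDiffOn_toNormalBundle.mono heD).comp hsymm e.mapsTo_symm
    add_mem_W := fun p ⟨hpN, hpU, hpe⟩ => he_of p ⟨hpN, hpU⟩ ▸ e.map_source hpe
    σ_add := fun p ⟨hpN, hpU, hpe⟩ => by
      rw [Function.comp_apply, ← he_of p ⟨hpN, hpU⟩, e.left_inv hpe,
        c.toNormalBundle_ofNormalBundle hpN hpU.1]
    σ_mem := fun u hu => ?_
    add_σ := fun u hu => by
      rw [Function.comp_apply, ← congrFun he, e.right_inv hu] }, ?_⟩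
  · have ha : c.K.starProjection (e.symm u) ∈ c.V := heD (e.map_target hu)
    refine ⟨c.toNormalBundle_mem ha, ⟨c.mapsTo_ψ ha, mem_univ _⟩, ?_⟩
    rw [mem_preimage, Function.comp_apply, c.ofNormalBundle_toNormalBundle ha]
    exact e.map_target hu
  · refine ⟨⟨hxU, mem_univ _⟩, ?_⟩
    rwa [mem_preimage, ofNormalBundle, map_zero, add_zero]

end StraighteningChart

end NormalBundle

/-- **Tubular Neighborhood Theorem.** For a smooth `k`-submanifold `M ⊂ ℝ^{n+k}`, an open
neighborhood `O` of the zero section of the normal bundle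
`NM = {(x,v) | x ∈ M, v ∈ (T_xM)ᗮ}` is mapped diffeomorphically by `γ(x,v) = x + v`
onto an open neighborhood `U` of `M` in `ℝ^{n+k}`. -/
theorem tubular_neighborhood (n k : ℕ) (M : Set (Euc (n + k)))
    (hM : IsSubmanifoldOfDim k M) :
    ∃ (O : Set (Euc (n + k) × Euc (n + k))) (U : Set (Euc (n + k)))
      (σ : Euc (n + k) → Euc (n + k) × Euc (n + k)),
      IsOpen U ∧ M ⊆ U ∧
      -- O consists of points of the normal bundle
      (∀ p ∈ O, p.1 ∈ M ∧ p.2 ∈ (tangentSpaceOf M p.1)ᗮ) ∧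
      -- O is open in the normal bundle (subspace topology)
      (∃ O' : Set (Euc (n + k) × Euc (n + k)), IsOpen O' ∧
        O = O' ∩ {p | p.1 ∈ M ∧ p.2 ∈ (tangentSpaceOf M p.1)ᗮ}) ∧
      -- O contains the zero section
      (∀ x ∈ M, ((x, (0 : Euc (n + k))) : Euc (n + k) × Euc (n + k)) ∈ O) ∧
      -- γ(x,v) = x + v maps O bijectively onto U …
      ((fun p : Euc (n + k) × Euc (n + k) => p.1 + p.2) '' O = U) ∧
      InjOn (fun p : Euc (n + k) × Euc (n + k) => p.1 + p.2) O ∧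
      -- … with smooth inverse σ, so that γ|_O is a diffeomorphism onto U
      ContDiffOn ℝ (⊤ : ℕ∞) σ U ∧
      (∀ p ∈ O, σ (p.1 + p.2) = p) ∧ (∀ u ∈ U, σ u ∈ O ∧ (σ u).1 + (σ u).2 = u) :=
  exists_tube_of_localSumInverse M (fun _ hx => ⟨hx, Submodule.zero_mem _⟩) fun _ hx =>
    let ⟨c, hxc⟩ := hM.exists_straighteningChart hx
    c.exists_localSumInverse hx hxc
end
end

section
/- Let f : M → N be a smooth map between smooth manifolds and S ⊂ N a smooth submanifold. If f is transverse to S (i.e., for every x ∈ M with f(x) ∈ S, T_{f(x)}S + im(df_x) = T_{f(x)}N), then f⁻¹(S) is a smooth submanifold of M, and if f⁻¹(S) is nonempty its codimension in M equals the codimension of S in N. -/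
/- Framework: embedded submanifolds of Euclidean space (Guillemin–Pollack style),
tangent spaces via velocity vectors of curves, local-straightening charts. -/

noncomputable section
open Set Function
open scoped RealInnerProductSpace

/-- `f` (smooth on `M`) is transverse to the submanifold `S ⊂ N`:
whenever `f x ∈ S`, `T_{f x}S + df_x(T_xM) = T_{f x}N`. -/
def TransverseOn {a b : ℕ} (f : Euc a → Euc b) (M : Set (Euc a)) (N S : Set (Euc b)) : Prop :=
  ∀ x ∈ M, f x ∈ S →
    ∀ w ∈ tangentSpaceOf N (f x), ∃ u ∈ tangentSpaceOf S (f x),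
      ∃ v ∈ tangentSpaceOf M x, w = u + fderiv ℝ f x v

/- Near a point `x` of `f⁻¹(S)`, bend a chart of `N` at `f x` so that it straightens `N` and `S`
simultaneously, onto subspaces `L ≤ K`. The orthogonal projection onto `W = Lᗮ ⊓ K` then cuts `S`
out of `N`, and transversality says exactly that `g = proj_W ∘ e ∘ f` has surjective derivative on
`T_x M`. Correcting a chart of `M` by a right inverse of that derivative, composed with `g`, gives
a chart straightening the zero set of `g` in `M`, of dimension `m - dim W = m - (d - s)`. -/

namespace Transversality

open Module Filter Topology
open scoped ContDiff

section LinearAlgebra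

variable {k V W : Type*} [DivisionRing k] [AddCommGroup V] [Module k V] [AddCommGroup W]
  [Module k W] {K : Submodule k V} {D : V →ₗ[k] W}

theorem add_apply_sub_mem_inf_ker_iff {ℓ : W →ₗ[k] V} (hℓK : ∀ w, ℓ w ∈ K)
    (hDℓ : ∀ w, D (ℓ w) = w) (v : V) (w : W) :
    v + ℓ (w - D v) ∈ K ⊓ LinearMap.ker D ↔ v ∈ K ∧ w = 0 := by
  have hD : D (v + ℓ (w - D v)) = w := by rw [map_add, hDℓ, add_sub_cancel]
  simp only [Submodule.mem_inf, LinearMap.mem_ker, hD]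
  constructor
  · rintro ⟨hK, rfl⟩
    simpa using K.sub_mem hK (hℓK (0 - D v))
  · rintro ⟨hv, rfl⟩
    exact ⟨K.add_mem hv (hℓK _), rfl⟩

theorem exists_rightInverse_mem_of_map_eq_top (hD : K.map D = ⊤) :
    ∃ ℓ : W →ₗ[k] V, (∀ w, ℓ w ∈ K) ∧ ∀ w, D (ℓ w) = w := by
  obtain ⟨g, hg⟩ := (D.domRestrict K).exists_rightInverse_of_surjective
    (by rwa [LinearMap.range_domRestrict])
  exact ⟨K.subtype ∘ₗ g, fun w => (g w).2, fun w => LinearMap.congr_fun hg w⟩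

theorem finrank_inf_ker_add_finrank [FiniteDimensional k V] (hD : K.map D = ⊤) :
    finrank k ↥(K ⊓ LinearMap.ker D) + finrank k W = finrank k K := by
  rw [← (D.domRestrict K).finrank_range_add_finrank_ker, LinearMap.range_domRestrict, hD,
    finrank_top, LinearMap.ker_domRestrict, ← Submodule.finrank_map_subtype_eq,
    Submodule.map_comap_subtype, add_comm]

end LinearAlgebra

theorem orthogonalProjectionOnto_inf_eq_zero_iff {F : Type*} [NormedAddCommGroup F]
    [InnerProductSpace ℝ F] [FiniteDimensional ℝ F] {L K : Submodule ℝ F} (hLK : L ≤ K) {v : F}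
    (hv : v ∈ K) : (Lᗮ ⊓ K).orthogonalProjectionOnto v = 0 ↔ v ∈ L := by
  rw [← Submodule.sup_orthogonal_inf_of_hasOrthogonalProjection hLK] at hv
  obtain ⟨l, hl, w, hw, rfl⟩ := Submodule.mem_sup.1 hv
  have hlW : l ∈ (Lᗮ ⊓ K)ᗮ :=
    Submodule.orthogonal_le inf_le_left (L.le_orthogonal_orthogonal hl)
  rw [Submodule.orthogonalProjectionOnto_eq_zero_iff, Submodule.add_mem_iff_right _ hlW,
    Submodule.add_mem_iff_right _ hl]
  have hW : w ∈ (Lᗮ ⊓ K)ᗮ ↔ w = 0 :=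
    ⟨fun h => (Submodule.mem_bot ℝ).1 ((Lᗮ ⊓ K).inf_orthogonal_eq_bot.le ⟨hw, h⟩),
      fun h => h ▸ Submodule.zero_mem _⟩
  have hL : w ∈ L ↔ w = 0 :=
    ⟨fun h => (Submodule.mem_bot ℝ).1 (L.inf_orthogonal_eq_bot.le ⟨h, hw.1⟩),
      fun h => h ▸ L.zero_mem⟩
  rw [hW, hL]

section Normed

variable {E : Type*} [NormedAddCommGroup E] [NormedSpace ℝ E]

theorem tangentSpaceOf_mono {S T : Set E} (h : S ⊆ T) (x : E) :
    tangentSpaceOf S x ≤ tangentSpaceOf T x :=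
  Submodule.span_mono fun _ ⟨γ, hγ, hγ0, hγ'⟩ => ⟨γ, fun t => h (hγ t), hγ0, hγ'⟩

structure IsLocalDiffeo (e : OpenPartialHomeomorph E E) : Prop where
  contDiffOn : ContDiffOn ℝ ∞ e e.source
  contDiffOn_symm : ContDiffOn ℝ ∞ e.symm e.target

namespace IsLocalDiffeo

variable {e e' : OpenPartialHomeomorph E E} {x : E}

theorem symm (he : IsLocalDiffeo e) : IsLocalDiffeo e.symm :=
  ⟨he.contDiffOn_symm, he.contDiffOn⟩

theorem trans (he : IsLocalDiffeo e) (he' : IsLocalDiffeo e') : IsLocalDiffeo (e.trans e') :=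
  ⟨he'.contDiffOn.comp (he.contDiffOn.mono inter_subset_left) fun _ hy => hy.2,
    he.contDiffOn_symm.comp (he'.contDiffOn_symm.mono inter_subset_left) fun _ hy => hy.2⟩

theorem restrOpen (he : IsLocalDiffeo e) {O : Set E} (hO : IsOpen O) :
    IsLocalDiffeo (e.restrOpen O hO) :=
  ⟨he.contDiffOn.mono (by simp), he.contDiffOn_symm.mono (by simp)⟩

theorem hasFDerivAt (he : IsLocalDiffeo e) (hx : x ∈ e.source) : HasFDerivAt e (fderiv ℝ e x) x :=
  ((he.contDiffOn.contDiffAt (e.open_source.mem_nhds hx)).differentiableAt (by simp)).hasFDerivAt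

theorem hasFDerivAt_symm (he : IsLocalDiffeo e) (hx : x ∈ e.source) :
    HasFDerivAt e.symm (fderiv ℝ e.symm (e x)) (e x) :=
  he.symm.hasFDerivAt (e.map_source hx)

theorem fderiv_symm_comp_fderiv (he : IsLocalDiffeo e) (hx : x ∈ e.source) :
    (fderiv ℝ e.symm (e x)).comp (fderiv ℝ e x) = .id ℝ E :=
  ((he.hasFDerivAt_symm hx).comp x (he.hasFDerivAt hx)).unique <|
    (hasFDerivAt_id x).congr_of_eventuallyEq (e.eventually_left_inverse hx)

theorem fderiv_comp_fderiv_symm (he : IsLocalDiffeo e) (hx : x ∈ e.source) :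
    (fderiv ℝ e x).comp (fderiv ℝ e.symm (e x)) = .id ℝ E := by
  have hd : HasFDerivAt e (fderiv ℝ e x) (e.symm (e x)) := by
    rw [e.left_inv hx]; exact he.hasFDerivAt hx
  exact (hd.comp (e x) (he.hasFDerivAt_symm hx)).unique <|
    (hasFDerivAt_id (e x)).congr_of_eventuallyEq (e.eventually_right_inverse' hx)

def fderivEquiv (he : IsLocalDiffeo e) (hx : x ∈ e.source) : E ≃L[ℝ] E :=
  .equivOfInverse' _ _ (he.fderiv_comp_fderiv_symm hx) (he.fderiv_symm_comp_fderiv hx)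

theorem hasFDerivAt_transition (he : IsLocalDiffeo e) (he' : IsLocalDiffeo e')
    (hx : x ∈ e.source) (hx' : x ∈ e'.source) :
    HasFDerivAt (fun v => e' (e.symm (e x + v)))
      ((he.fderivEquiv hx).symm.trans (he'.fderivEquiv hx') : E →L[ℝ] E) 0 := by
  have he'x : HasFDerivAt e' (fderiv ℝ e' x) (e.symm (e x + 0)) := by
    simpa [e.left_inv hx] using he'.hasFDerivAt hx'
  have hex : HasFDerivAt e.symm (fderiv ℝ e.symm (e x)) (e x + 0) := by
    simpa using he.hasFDerivAt_symm hx
  exact he'x.comp 0 (hex.comp 0 ((hasFDerivAt_id 0).const_add (e x)))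

end IsLocalDiffeo

theorem exists_isLocalDiffeo [CompleteSpace E] {φ : E → E} {U : Set E} {x : E} (hU : IsOpen U)
    (hx : x ∈ U) (hφ : ContDiffOn ℝ ∞ φ U) {φ' : E ≃L[ℝ] E}
    (hφ' : HasFDerivAt φ (φ' : E →L[ℝ] E) x) :
    ∃ e : OpenPartialHomeomorph E E, IsLocalDiffeo e ∧ ⇑e = φ ∧ x ∈ e.source ∧ e.source ⊆ U := by
  have hφx := hφ.contDiffAt (hU.mem_nhds hx)
  set e₀ := hφx.toOpenPartialHomeomorph φ hφ' (by simp)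
  have he₀ : ⇑e₀ = φ := hφx.toOpenPartialHomeomorph_coe hφ' _
  -- invertibility of the derivative is an open condition, and it makes the inverse smooth
  set O := U ∩ fderiv ℝ φ ⁻¹' range ((↑) : (E ≃L[ℝ] E) → E →L[ℝ] E)
  have hO : IsOpen O :=
    (hφ.continuousOn_fderiv_of_isOpen hU (by simp)).isOpen_inter_preimage hU
      ContinuousLinearEquiv.isOpen
  refine ⟨e₀.restrOpen O hO, ⟨?_, ?_⟩, he₀,
    ⟨hφx.mem_toOpenPartialHomeomorph_source hφ' _, hx, φ', hφ'.fderiv.symm⟩, fun y hy => hy.2.1⟩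
  · rw [e₀.coe_restrOpen, he₀]
    exact hφ.mono fun y hy => hy.2.1
  · intro z ⟨hz, ⟨hzU, G, hG⟩⟩
    have hφz := hφ.contDiffAt (hU.mem_nhds hzU)
    refine (e₀.contDiffAt_symm hz (f₀' := G) ?_ (he₀ ▸ hφz)).contDiffWithinAt
    rw [hG, he₀]
    exact (hφz.differentiableAt (by simp)).hasFDerivAt

structure IsStraightening (e : OpenPartialHomeomorph E E) (K : Submodule ℝ E) (S : Set E) (x : E) :
    Prop extends IsLocalDiffeo e where
  mem_source : x ∈ e.source
  mem_iff : ∀ y ∈ e.source, y ∈ S ↔ e y ∈ K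

theorem isSubmanifoldOfDim_iff {k : ℕ} {S : Set E} :
    IsSubmanifoldOfDim k S ↔ ∀ x ∈ S, ∃ (e : OpenPartialHomeomorph E E) (K : Submodule ℝ E),
      finrank ℝ K = k ∧ IsStraightening e K S x := by
  have inter_eq_iff {U : Set E} {φ : E → E} {K : Submodule ℝ E} :
      S ∩ U = U ∩ φ ⁻¹' K ↔ ∀ y ∈ U, y ∈ S ↔ φ y ∈ K := by
    simp only [Set.ext_iff, mem_inter_iff, mem_preimage, SetLike.mem_coe]
    exact ⟨fun h y hy => by simpa [hy] using h y,
      fun h y => by by_cases hy : y ∈ U <;> simp [hy, h]⟩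
  refine forall₂_congr fun x _ => ⟨?_, ?_⟩
  · rintro ⟨U, V, φ, ψ, K, hk, hU, hV, hx, hφ, hψ, hφUV, hψVU, hψφ, hφψ, hSU⟩
    let e : OpenPartialHomeomorph E E :=
      { toFun := φ, invFun := ψ, source := U, target := V, map_source' := hφUV,
        map_target' := hψVU, left_inv' := hψφ, right_inv' := hφψ, open_source := hU,
        open_target := hV, continuousOn_toFun := hφ.continuousOn,
        continuousOn_invFun := hψ.continuousOn }
    exact ⟨e, K, hk, ⟨hφ, hψ⟩, hx, inter_eq_iff.1 hSU⟩
  · rintro ⟨e, K, hk, ⟨hφ, hψ⟩, hx, hSU⟩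
    exact ⟨e.source, e.target, e, e.symm, K, hk, e.open_source, e.open_target, hx, hφ, hψ,
      e.mapsTo, e.mapsTo_symm, fun _ => e.left_inv, fun _ => e.right_inv, inter_eq_iff.2 hSU⟩

namespace IsStraightening

variable {e e' : OpenPartialHomeomorph E E} {K K' : Submodule ℝ E} {S N : Set E} {x : E}

theorem restrOpen (h : IsStraightening e K S x) {O : Set E} (hO : IsOpen O) (hx : x ∈ O)
    {T : Set E} (hST : ∀ y ∈ O, y ∈ S ↔ y ∈ T) : IsStraightening (e.restrOpen O hO) K T x where
  toIsLocalDiffeo := h.toIsLocalDiffeo.restrOpen hO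
  mem_source := ⟨h.mem_source, hx⟩
  mem_iff y hy := (hST y hy.2).symm.trans (h.mem_iff y hy.1)

theorem trans_symm (h : IsStraightening e K N x) {Φ : OpenPartialHomeomorph E E}
    (hΦ : IsLocalDiffeo Φ) (hx : e x ∈ Φ.target) (hK : ∀ u ∈ Φ.source, Φ u ∈ K ↔ u ∈ K') :
    IsStraightening (e.trans Φ.symm) K' N x where
  toIsLocalDiffeo := h.toIsLocalDiffeo.trans hΦ.symm
  mem_source := ⟨h.mem_source, hx⟩
  mem_iff y hy := by
    have hyΦ : e y ∈ Φ.target := hy.2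
    rw [h.mem_iff _ hy.1, ← Φ.right_inv hyΦ, hK _ (Φ.map_target hyΦ)]
    rfl

theorem fderiv_mem_of_mem_tangentSet [FiniteDimensional ℝ E] (h : IsStraightening e K S x)
    (hx : x ∈ S) {v : E} (hv : v ∈ tangentSet S x) : fderiv ℝ e x v ∈ K := by
  obtain ⟨γ, hγS, rfl, hγ⟩ := hv
  have hd : HasDerivAt (fun t => e (γ t)) (fderiv ℝ e (γ 0) v) 0 :=
    (h.hasFDerivAt h.mem_source).comp_hasDerivAt 0 hγ
  have hsource : ∀ᶠ t in 𝓝 0, γ t ∈ e.source :=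
    hγ.continuousAt.preimage_mem_nhds (e.open_source.mem_nhds h.mem_source)
  refine K.closed_of_finiteDimensional.mem_of_tendsto (hasDerivAt_iff_tendsto_slope.1 hd)
    (eventually_nhdsWithin_of_eventually_nhds ?_)
  filter_upwards [hsource] with t ht
  rw [slope_def_module]
  exact K.smul_mem _ (K.sub_mem ((h.mem_iff _ ht).1 (hγS t)) ((h.mem_iff _ h.mem_source).1 hx))

theorem exists_smul_mem_tangentSet (h : IsStraightening e K S x) (hx : x ∈ S) {k : E}
    (hk : k ∈ K) : ∃ r : ℝ, r ≠ 0 ∧ fderiv ℝ e.symm (e x) (r • k) ∈ tangentSet S x := by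
  have hline : ∀ᶠ s in 𝓝 (0 : ℝ), e x + s • k ∈ e.target :=
    (continuous_const.add (continuous_id.smul continuous_const)).continuousAt.preimage_mem_nhds
      (by simpa using e.open_target.mem_nhds (e.map_source h.mem_source))
  obtain ⟨ε, hε, hball⟩ := Metric.eventually_nhds_iff.1 hline
  -- a bounded reparametrisation keeps the whole curve inside the chart
  have htarget : ∀ t, e x + (ε / 2 * Real.sin t) • k ∈ e.target := fun t => by
    refine hball ?_
    rw [Real.dist_0_eq_abs, abs_mul, abs_of_pos (half_pos hε)]
    nlinarith [Real.abs_sin_le_one t]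
  have hcurve : HasDerivAt (fun t => e x + (ε / 2 * Real.sin t) • k) ((ε / 2) • k) 0 := by
    simpa using (((Real.hasDerivAt_sin 0).const_mul (ε / 2)).smul_const k).const_add (e x)
  refine ⟨ε / 2, (half_pos hε).ne', fun t => e.symm (e x + (ε / 2 * Real.sin t) • k),
    fun t => ?_, by simp [e.left_inv h.mem_source], ?_⟩
  · rw [h.mem_iff _ (e.map_target (htarget t)), e.right_inv (htarget t)]
    exact K.add_mem ((h.mem_iff _ h.mem_source).1 hx) (K.smul_mem _ hk)
  · exact (h.hasFDerivAt_symm h.mem_source).comp_hasDerivAt_of_eq 0 hcurve (by simp)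

theorem tangentSpaceOf_eq [FiniteDimensional ℝ E] (h : IsStraightening e K S x) (hx : x ∈ S) :
    tangentSpaceOf S x = K.comap (fderiv ℝ e x : E →ₗ[ℝ] E) := by
  refine le_antisymm (Submodule.span_le.2 fun v hv => h.fderiv_mem_of_mem_tangentSet hx hv)
    fun v hv => ?_
  obtain ⟨r, hr, hrv⟩ := h.exists_smul_mem_tangentSet hx hv
  have hv : v = r⁻¹ • fderiv ℝ e.symm (e x) (r • fderiv ℝ e x v) := by
    rw [map_smul, smul_smul, inv_mul_cancel₀ hr, one_smul, ← ContinuousLinearMap.comp_apply,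
      h.fderiv_symm_comp_fderiv h.mem_source, ContinuousLinearMap.id_apply]
  rw [hv]
  exact Submodule.smul_mem _ _ (Submodule.subset_span hrv)

theorem finrank_tangentSpaceOf [FiniteDimensional ℝ E] (h : IsStraightening e K S x)
    (hx : x ∈ S) : finrank ℝ (tangentSpaceOf S x) = finrank ℝ K := by
  let A := (h.fderivEquiv h.mem_source).toLinearEquiv
  rw [h.tangentSpaceOf_eq hx, show (fderiv ℝ e x : E →ₗ[ℝ] E) = A from rfl,
    Submodule.comap_equiv_eq_map_symm, LinearEquiv.finrank_map_eq]

theorem fderiv_fderiv_symm_mem [FiniteDimensional ℝ E] (hS : IsStraightening e K S x)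
    (hN : IsStraightening e' K' N x) (hSN : S ⊆ N) (hx : x ∈ S) {k : E} (hk : k ∈ K) :
    fderiv ℝ e' x (fderiv ℝ e.symm (e x) k) ∈ K' := by
  have hv : fderiv ℝ e.symm (e x) k ∈ tangentSpaceOf S x := by
    rw [hS.tangentSpaceOf_eq hx]
    change fderiv ℝ e x (fderiv ℝ e.symm (e x) k) ∈ K
    rwa [← ContinuousLinearMap.comp_apply, hS.fderiv_comp_fderiv_symm hS.mem_source,
      ContinuousLinearMap.id_apply]
  have hvN := tangentSpaceOf_mono hSN x hv
  rwa [hN.tangentSpaceOf_eq (hSN hx)] at hvN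

theorem exists_isStraightening_setOf_eq_zero [FiniteDimensional ℝ E] {F : Type*}
    [NormedAddCommGroup F] [NormedSpace ℝ F] [FiniteDimensional ℝ F]
    {M : Set E} (h : IsStraightening e K M x) (hx : x ∈ M) {g : E → F} {O : Set E} (hO : IsOpen O)
    (hxO : x ∈ O) (hg : ContDiffOn ℝ ∞ g O)
    (hsurj : (tangentSpaceOf M x).map (fderiv ℝ g x : E →ₗ[ℝ] F) = ⊤) :
    ∃ (e' : OpenPartialHomeomorph E E) (K' : Submodule ℝ E),
      finrank ℝ K' + finrank ℝ F = finrank ℝ K ∧ IsStraightening e' K' {y ∈ M | g y = 0} x := by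
  set A := fderiv ℝ e x
  set D : E →L[ℝ] F := (fderiv ℝ g x).comp (fderiv ℝ e.symm (e x))
  have hDA : D.comp A = fderiv ℝ g x := by
    rw [ContinuousLinearMap.comp_assoc, h.fderiv_symm_comp_fderiv h.mem_source,
      ContinuousLinearMap.comp_id]
  have hDK : K.map (D : E →ₗ[ℝ] F) = ⊤ := by
    refine eq_top_iff.2 (hsurj.symm.le.trans ?_)
    rintro _ ⟨v, hv, rfl⟩
    rw [h.tangentSpaceOf_eq hx] at hv
    exact ⟨A v, hv, by simp [← hDA]⟩
  obtain ⟨ℓ₀, hℓK, hDℓ⟩ := exists_rightInverse_mem_of_map_eq_top hDK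
  let ℓ : F →L[ℝ] E := LinearMap.toContinuousLinearMap ℓ₀
  -- the correction `ℓ (g - D ∘ e)` has derivative zero at `x` and turns the zero set of `g`
  -- into the subspace `K ⊓ ker D`
  have hΦ : ContDiffOn ℝ ∞ (fun y => e y + ℓ (g y - D (e y))) (e.source ∩ O) :=
    (h.contDiffOn.mono inter_subset_left).add (ℓ.contDiff.comp_contDiffOn
      ((hg.mono inter_subset_right).sub
        (D.contDiff.comp_contDiffOn (h.contDiffOn.mono inter_subset_left))))
  have hΦ' : HasFDerivAt (fun y => e y + ℓ (g y - D (e y)))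
      (h.fderivEquiv h.mem_source : E →L[ℝ] E) x := by
    have hgx := ((hg.contDiffAt (hO.mem_nhds hxO)).differentiableAt (by simp)).hasFDerivAt
    have hsum := (h.hasFDerivAt h.mem_source).add (ℓ.hasFDerivAt.comp x
      (hgx.sub (D.hasFDerivAt.comp x (h.hasFDerivAt h.mem_source))))
    rwa [hDA, sub_self, ContinuousLinearMap.comp_zero, add_zero] at hsum
  obtain ⟨e', he', hΦe', hxe', hsub⟩ :=
    exists_isLocalDiffeo (e.open_source.inter hO) ⟨h.mem_source, hxO⟩ hΦ hΦ'
  refine ⟨e', K ⊓ LinearMap.ker (D : E →ₗ[ℝ] F), finrank_inf_ker_add_finrank hDK,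
    ⟨he', hxe', fun y hy => ?_⟩⟩
  rw [hΦe', mem_ofPred_eq, h.mem_iff y (hsub hy).1]
  exact (add_apply_sub_mem_inf_ker_iff (ℓ := ℓ₀) hℓK hDℓ (e y) (g y)).symm

end IsStraightening

end Normed

section InnerProduct

variable {E : Type*} [NormedAddCommGroup E] [InnerProductSpace ℝ E] [FiniteDimensional ℝ E]

theorem exists_isLocalDiffeo_extend {KS KN : Submodule ℝ E} {σ : E → E} {Ω : Set E}
    (hΩ : IsOpen Ω) (h0 : 0 ∈ Ω) (hσ : ContDiffOn ℝ ∞ σ Ω) {T : E ≃L[ℝ] E}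
    (hT : HasFDerivAt σ (T : E →L[ℝ] E) 0) (hKS : KS ≤ KN.comap (T : E →ₗ[ℝ] E))
    (hσK : ∀ v ∈ Ω, v ∈ KS → σ v ∈ KN) :
    ∃ Φ : OpenPartialHomeomorph E E, IsLocalDiffeo Φ ∧ 0 ∈ Φ.source ∧
      (∀ u ∈ Φ.source, Φ u ∈ KN ↔ u ∈ KN.comap (T : E →ₗ[ℝ] E)) ∧
      ∀ u ∈ Φ.source, u ∈ KS → u ∈ Ω ∧ Φ u = σ u := by
  set P := KS.starProjection
  have hΦ : ContDiffOn ℝ ∞ (fun u => σ (P u) + T (u - P u)) (P ⁻¹' Ω) :=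
    (hσ.comp P.contDiff.contDiffOn fun _ hu => hu).add
      (T.contDiff.comp_contDiffOn (contDiffOn_id.sub P.contDiff.contDiffOn))
  have hΦ' : HasFDerivAt (fun u => σ (P u) + T (u - P u)) (T : E →L[ℝ] E) 0 := by
    have hσP : HasFDerivAt σ (T : E →L[ℝ] E) (P 0) := by rwa [map_zero]
    have hsum := (hσP.comp 0 P.hasFDerivAt).add
      ((T : E →L[ℝ] E).hasFDerivAt.comp 0 ((hasFDerivAt_id 0).sub P.hasFDerivAt))
    rwa [← ContinuousLinearMap.comp_add, add_sub_cancel, ContinuousLinearMap.comp_id] at hsum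
  obtain ⟨Φ, hΦ, hΦeq, h0Φ, hsub⟩ :=
    exists_isLocalDiffeo (hΩ.preimage P.continuous) (by simpa using h0) hΦ hΦ'
  refine ⟨Φ, hΦ, h0Φ, fun u hu => ?_, fun u hu huK => ?_⟩
  · have hPu : P u ∈ KS := KS.starProjection_apply_mem u
    rw [hΦeq, KN.add_mem_iff_right (hσK _ (hsub hu) hPu),
      ← Submodule.sub_mem_iff_left _ (hKS hPu)]
    rfl
  · have hPu : P u = u := Submodule.starProjection_eq_self_iff.2 huK
    have huΩ := hsub hu
    rw [mem_preimage, hPu] at huΩ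
    exact ⟨huΩ, by simp [hΦeq, hPu]⟩

theorem exists_isStraightening_of_subset {S N : Set E} (hSN : S ⊆ N) {y : E} (hy : y ∈ S)
    {eN eS : OpenPartialHomeomorph E E} {KN KS : Submodule ℝ E} (hN : IsStraightening eN KN N y)
    (hS : IsStraightening eS KS S y) :
    ∃ (e : OpenPartialHomeomorph E E) (K : Submodule ℝ E),
      KS ≤ K ∧ IsStraightening e K N y ∧ IsStraightening e KS S y := by
  set z := eS y
  set T := (hS.fderivEquiv hS.mem_source).symm.trans (hN.fderivEquiv hN.mem_source)
  set σ : E → E := fun v => eN (eS.symm (z + v))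
  set Ω := (z + ·) ⁻¹' (eS.target ∩ eS.symm ⁻¹' eN.source)
  have hΩ : IsOpen Ω :=
    (eS.isOpen_inter_preimage_symm eN.open_source).preimage (continuous_const.add continuous_id)
  have h0 : 0 ∈ Ω := by
    simpa [Ω, z, eS.left_inv hS.mem_source] using ⟨eS.map_source hS.mem_source, hN.mem_source⟩
  have hσ : ContDiffOn ℝ ∞ σ Ω :=
    hN.contDiffOn.comp (hS.contDiffOn_symm.comp (contDiff_const.add contDiff_id).contDiffOn
      fun _ hv => hv.1) fun _ hv => hv.2
  have hσS : ∀ v ∈ Ω, v ∈ KS → eS.symm (z + v) ∈ S := fun v hv hvK => by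
    rw [hS.mem_iff _ (eS.map_target hv.1), eS.right_inv hv.1]
    exact KS.add_mem ((hS.mem_iff _ hS.mem_source).1 hy) hvK
  have hKS : KS ≤ KN.comap (T : E →ₗ[ℝ] E) := fun _ hk => hS.fderiv_fderiv_symm_mem hN hSN hy hk
  -- bend `KS` onto the image of `S` in `N`-coordinates, keeping `N` flat
  obtain ⟨Φ, hΦ, h0Φ, hΦN, hΦS⟩ := exists_isLocalDiffeo_extend hΩ h0 hσ
    (hS.hasFDerivAt_transition hN.toIsLocalDiffeo hS.mem_source hN.mem_source) hKS
    (fun v hv hvK => (hN.mem_iff _ hv.2).1 (hSN (hσS v hv hvK)))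
  have hΦ0 : eN y ∈ Φ.target := by
    simpa [(hΦS 0 h0Φ KS.zero_mem).2, σ, z, eS.left_inv hS.mem_source] using Φ.map_source h0Φ
  -- shrink the chart so that the shifted `S`-coordinates of its points lie in the domain of `Φ`
  set O := eS.source ∩ (fun y' => eS y' - z) ⁻¹' Φ.source
  have hO : IsOpen O := (hS.contDiffOn.continuousOn.sub continuousOn_const).isOpen_inter_preimage
    eS.open_source Φ.open_source
  have hNchart := (hN.trans_symm hΦ hΦ0 hΦN).restrOpen hO ⟨hS.mem_source, by simpa [z] using h0Φ⟩
    fun _ _ => Iff.rfl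
  refine ⟨_, _, hKS, hNchart,
    { hNchart with mem_iff := fun y' ⟨⟨hy'N, hy'Φ⟩, hy'O⟩ => ?_ }⟩
  simp only [OpenPartialHomeomorph.coe_restrOpen, OpenPartialHomeomorph.coe_trans,
    Function.comp_apply]
  constructor
  · intro hy'S
    have hvK : eS y' - z ∈ KS :=
      KS.sub_mem ((hS.mem_iff _ hy'O.1).1 hy'S) ((hS.mem_iff _ hS.mem_source).1 hy)
    have hΦv : Φ (eS y' - z) = eN y' := by
      rw [(hΦS _ hy'O.2 hvK).2]
      simp [σ, eS.left_inv hy'O.1]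
    rwa [← hΦv, Φ.left_inv hy'O.2]
  · intro huK
    obtain ⟨huΩ, hΦu⟩ := hΦS _ (Φ.map_target hy'Φ) huK
    rw [Φ.right_inv hy'Φ] at hΦu
    rw [eN.injOn hy'N huΩ.2 hΦu]
    exact hσS _ huΩ huK

end InnerProduct

section Transverse

variable {E F : Type*} [NormedAddCommGroup E] [NormedSpace ℝ E]
  [NormedAddCommGroup F] [InnerProductSpace ℝ F] [FiniteDimensional ℝ F]
  {e : OpenPartialHomeomorph F F} {K L : Submodule ℝ F} {N S : Set F} {y : F}

theorem map_orthogonalProjectionOnto_comp_eq_top (hN : IsStraightening e K N y)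
    (hS : IsStraightening e L S y) (hyS : y ∈ S) (hyN : y ∈ N) {T : Submodule ℝ E}
    {D : E →L[ℝ] F}
    (ht : ∀ w ∈ tangentSpaceOf N y, ∃ u ∈ tangentSpaceOf S y, ∃ v ∈ T, w = u + D v) :
    T.map ((Lᗮ ⊓ K).orthogonalProjectionOnto ∘L fderiv ℝ e y ∘L D : E →ₗ[ℝ] ↥(Lᗮ ⊓ K)) = ⊤ := by
  refine eq_top_iff.2 fun w _ => ?_
  set Q := (Lᗮ ⊓ K).orthogonalProjectionOnto
  have hABw : fderiv ℝ e y (fderiv ℝ e.symm (e y) w) = w := by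
    rw [← ContinuousLinearMap.comp_apply, hN.fderiv_comp_fderiv_symm hN.mem_source,
      ContinuousLinearMap.id_apply]
  have hBw : fderiv ℝ e.symm (e y) w ∈ tangentSpaceOf N y := by
    rw [hN.tangentSpaceOf_eq hyN, Submodule.mem_comap]
    simpa [hABw] using w.2.2
  obtain ⟨u, hu, v, hv, huv⟩ := ht _ hBw
  rw [hS.tangentSpaceOf_eq hyS, Submodule.mem_comap] at hu
  have hQu : Q (fderiv ℝ e y u) = 0 := by
    rw [Submodule.orthogonalProjectionOnto_eq_zero_iff]
    exact Submodule.orthogonal_le inf_le_left (L.le_orthogonal_orthogonal hu)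
  refine ⟨v, hv, ?_⟩
  have hDv : D v = fderiv ℝ e.symm (e y) w - u := by rw [huv]; abel
  change Q (fderiv ℝ e y (D v)) = w
  rw [hDv, map_sub, map_sub, hABw, hQu, sub_zero,
    Submodule.orthogonalProjectionOnto_mem_subspace_eq_self]

theorem IsStraightening.exists_isStraightening_preimage [FiniteDimensional ℝ E]
    {eM : OpenPartialHomeomorph E E} {KM : Submodule ℝ E} {M : Set E} {x : E}
    (hM : IsStraightening eM KM M x) (hxM : x ∈ M) {f : E → F}
    (hN : IsStraightening e K N (f x)) (hS : IsStraightening e L S (f x)) (hLK : L ≤ K)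
    (hfx : f x ∈ S) (hf : ContDiff ℝ ∞ f) (hmaps : MapsTo f M N)
    (ht : ∀ w ∈ tangentSpaceOf N (f x), ∃ u ∈ tangentSpaceOf S (f x),
      ∃ v ∈ tangentSpaceOf M x, w = u + fderiv ℝ f x v) :
    ∃ (e' : OpenPartialHomeomorph E E) (K' : Submodule ℝ E),
      finrank ℝ K' + (finrank ℝ K - finrank ℝ L) = finrank ℝ KM ∧
        IsStraightening e' K' {y ∈ M | f y ∈ S} x := by
  set Q := (Lᗮ ⊓ K).orthogonalProjectionOnto
  have hO : IsOpen (f ⁻¹' e.source) := e.open_source.preimage hf.continuous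
  have hg : ContDiffOn ℝ ∞ (fun y => Q (e (f y))) (f ⁻¹' e.source) :=
    Q.contDiff.comp_contDiffOn (hN.contDiffOn.comp hf.contDiffOn (mapsTo_preimage _ _))
  have hg' : fderiv ℝ (fun y => Q (e (f y))) x = Q ∘L fderiv ℝ e (f x) ∘L fderiv ℝ f x :=
    (Q.hasFDerivAt.comp x ((hN.hasFDerivAt hN.mem_source).comp x
      ((hf.differentiable (by simp)) x).hasFDerivAt)).fderiv
  obtain ⟨e', K', hdim, h'⟩ := hM.exists_isStraightening_setOf_eq_zero hxM hO hN.mem_source hg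
    (hg' ▸ map_orthogonalProjectionOnto_comp_eq_top hN hS hfx (hmaps hxM) ht)
  refine ⟨_, K', ?_, h'.restrOpen hO hN.mem_source fun y hy => and_congr_right fun hyM => ?_⟩
  · have := Submodule.finrank_add_inf_finrank_orthogonal hLK
    omega
  · rw [hS.mem_iff _ hy]
    exact orthogonalProjectionOnto_inf_eq_zero_iff hLK ((hN.mem_iff _ hy).1 (hmaps hyM))

end Transverse

end Transversality

/-- **Thom's Transversality Theorem.** If a smooth map `f : M → N` is transverse to a smooth
submanifold `S ⊂ N`, then `f⁻¹(S)` is a smooth submanifold of `M` whose codimension in `M`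
equals the codimension of `S` in `N` (dimension `m - (d - s)`). -/
theorem transversality_theorem (a b m d s : ℕ) (M : Set (Euc a)) (N S : Set (Euc b))
    (f : Euc a → Euc b)
    (hM : IsSubmanifoldOfDim m M) (hN : IsSubmanifoldOfDim d N)
    (hSN : S ⊆ N) (hS : IsSubmanifoldOfDim s S)
    (hf : ContDiff ℝ (⊤ : ℕ∞) f) (hmaps : MapsTo f M N)
    (ht : TransverseOn f M N S) :
    IsSubmanifoldOfDim (m - (d - s)) {x ∈ M | f x ∈ S} := by
  rw [Transversality.isSubmanifoldOfDim_iff] at hM hN hS ⊢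
  rintro x ⟨hxM, hfx⟩
  obtain ⟨eM, KM, rfl, hMx⟩ := hM x hxM
  obtain ⟨eN, KN, rfl, hNfx⟩ := hN _ (hSN hfx)
  obtain ⟨eS, KS, rfl, hSfx⟩ := hS _ hfx
  obtain ⟨e, K, hKS, hNe, hSe⟩ := Transversality.exists_isStraightening_of_subset hSN hfx hNfx hSfx
  obtain ⟨e', K', hdim, h'⟩ :=
    hMx.exists_isStraightening_preimage hxM hNe hSe hKS hfx hf hmaps (ht x hxM hfx)
  have hK : Module.finrank ℝ K = Module.finrank ℝ KN :=
    (hNe.finrank_tangentSpaceOf (hSN hfx)).symm.trans (hNfx.finrank_tangentSpaceOf (hSN hfx))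
  exact ⟨e', K', by omega, h'⟩
end
end
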